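/- arXiv:1602.05524 — 4 statements merged into one kernel-verified Lean document; each statement's English description precedes it below -/
import Mathlib

section
/- Let m > 0 and λ₁ > 0 be real numbers and let q, p be real numbers with 0 < q < 1 < p. Then there exists λ' > 0 such that for every λ ≥ λ' and every real number t > 0 one has m·(λ·t^q + t^p) > λ₁·t. -/
/-- for `m > 0`, `λ₁ > 0` and `0 < q < 1 < p` there exists `λ' > 0` such
that for every `λ ≥ λ'` and every `t > 0` one has `m·(λ·t^q + t^p) > λ₁·t`. -/
theorem stmt_4 (m lam₁ q p : ℝ) (hm : 0 < m) (hlam₁ : 0 < lam₁)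
    (hq0 : 0 < q) (hq1 : q < 1) (hp : 1 < p) :
    ∃ lam' : ℝ, 0 < lam' ∧ ∀ lam : ℝ, lam' ≤ lam → ∀ t : ℝ, 0 < t →
      m * (lam * t ^ q + t ^ p) > lam₁ * t := by
  set T : ℝ := (lam₁ / m) ^ (1 / (p - 1)) with hT
  have hTpos : 0 < T := Real.rpow_pos_of_pos (div_pos hlam₁ hm) _
  have hp1 : p - 1 ≠ 0 := by nlinarith
  have hTp : T ^ (p - 1) = lam₁ / m := by
    rw [hT, ← Real.rpow_mul (le_of_lt (div_pos hlam₁ hm)), one_div_mul_cancel hp1,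
      Real.rpow_one]
  refine ⟨lam₁ * T ^ (1 - q) / m + 1, by positivity, fun lam hlam t ht => ?_⟩
  have htq : (0:ℝ) < t ^ q := Real.rpow_pos_of_pos ht q
  have htp : (0:ℝ) < t ^ p := Real.rpow_pos_of_pos ht p
  have hlam0 : (0:ℝ) < lam := lt_of_lt_of_le (by positivity) hlam
  rcases le_or_gt t T with hle | hgt
  · -- small t : use t^q term
    have h1 : t ^ (q - 1) ≥ T ^ (q - 1) :=
      Real.rpow_le_rpow_of_nonpos ht hle (by linarith)
    have h2 : t ^ q = t ^ (q - 1) * t := by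
      rw [← Real.rpow_add_one (ne_of_gt ht) (q - 1)]; ring_nf
    have h3 : t ^ q ≥ T ^ (q - 1) * t := by
      rw [h2]; exact mul_le_mul_of_nonneg_right h1 ht.le
    have hT1 : T ^ (1 - q) * T ^ (q - 1) = 1 := by
      rw [← Real.rpow_add hTpos]; norm_num
    have key : m * lam * t ^ q > lam₁ * t := by
      have h4 : m * lam ≥ lam₁ * T ^ (1 - q) + m := by
        have := mul_le_mul_of_nonneg_left hlam hm.le
        calc m * lam ≥ m * (lam₁ * T ^ (1 - q) / m + 1) := this
          _ = lam₁ * T ^ (1 - q) + m := by field_simp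
      have h5 : m * lam * t ^ q ≥ (lam₁ * T ^ (1 - q) + m) * t ^ q :=
        mul_le_mul_of_nonneg_right h4 htq.le
      have h6 : lam₁ * T ^ (1 - q) * t ^ q ≥ lam₁ * T ^ (1 - q) * (T ^ (q - 1) * t) := by
        apply mul_le_mul_of_nonneg_left h3
        positivity
      have h7 : lam₁ * T ^ (1 - q) * (T ^ (q - 1) * t) = lam₁ * t := by
        rw [mul_assoc lam₁, ← mul_assoc (T ^ (1 - q)), hT1]; ring
      nlinarith
    nlinarith
  · -- large t : use t^p term
    have h1 : t ^ (p - 1) ≥ T ^ (p - 1) :=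
      Real.rpow_le_rpow hTpos.le hgt.le (by linarith)
    have h2 : t ^ p = t ^ (p - 1) * t := by
      rw [← Real.rpow_add_one (ne_of_gt ht) (p - 1)]; ring_nf
    have h3 : m * t ^ p ≥ lam₁ * t := by
      rw [h2, hTp] at *
      have : t ^ (p - 1) * t ≥ lam₁ / m * t := mul_le_mul_of_nonneg_right h1 ht.le
      calc m * (t ^ (p - 1) * t) ≥ m * (lam₁ / m * t) := mul_le_mul_of_nonneg_left this hm.le
        _ = lam₁ * t := by field_simp
    have hpos : 0 < m * (lam * t ^ q) := by positivity
    nlinarith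
end

section
/- Let N be a positive natural number, let Ω ⊆ ℝ^N be a measurable set, let q, p be real numbers with 0 < q < 1 < p, and let λ > 0. Let k, h : ℝ^N → ℝ be measurable and nonnegative almost everywhere on Ω, and let u : ℝ^N → ℝ be differentiable and nonnegative almost everywhere on Ω, with the integrals ∫_Ω |∇u|² dx, ∫_Ω k·u^{q+1} dx and ∫_Ω h·u^{p+1} dx all finite. Assume ∫_Ω |∇u|² dx = λ·∫_Ω k·u^{q+1} dx + ∫_Ω h·u^{p+1} dx, assume ∫_Ω |∇u|² dx ≥ λ·q·∫_Ω k·u^{q+1} dx + p·∫_Ω h·u^{p+1} dx, and assume ∫_Ω k·u^{q+1} dx > 0. Then the energy E(u) := (1/2)·∫_Ω |∇u|² dx − (λ/(q+1))·∫_Ω k·u^{q+1} dx − (1/(p+1))·∫_Ω h·u^{p+1} dx satisfies E(u) < 0. -/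
open MeasureTheory

/-!
Only the three integrals enter, as real numbers `G`, `A`, `B`. Eliminating `G` with the energy
identity, the stability inequality becomes `(p - 1) B ≤ λ (1 - q) A`, and
`E = λ A (q - 1) / (2 (q + 1)) + (p - 1) B / (2 (p + 1))
   ≤ λ A (1 - q) / 2 · (1 / (p + 1) - 1 / (q + 1))`,
which is negative because `λ A > 0`, `q < 1` and `q < p`.
-/

theorem energy_neg_of_energy_eq_of_stable {G A B lam q p : ℝ} (hq : -1 < q) (hq1 : q < 1)
    (hqp : q < p) (hA : 0 < lam * A) (hEn : G = lam * A + B)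
    (hStab : G ≥ lam * q * A + p * B) :
    1 / 2 * G - lam / (q + 1) * A - 1 / (p + 1) * B < 0 := by
  have hq1' : 0 < q + 1 := by linarith
  have hp1' : 0 < p + 1 := by linarith
  have hB : (p - 1) * B ≤ lam * (1 - q) * A := by nlinarith
  calc 1 / 2 * G - lam / (q + 1) * A - 1 / (p + 1) * B
      = lam * A * (q - 1) / (2 * (q + 1)) + (p - 1) * B / (2 * (p + 1)) := by
        rw [hEn]; field_simp; ring
    _ ≤ lam * A * (q - 1) / (2 * (q + 1)) + lam * (1 - q) * A / (2 * (p + 1)) := by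
        gcongr
    _ = lam * A * (1 - q) / 2 * (1 / (p + 1) - 1 / (q + 1)) := by
        field_simp; ring
    _ < 0 := by
        apply mul_neg_of_pos_of_neg
        · have : 0 < 1 - q := by linarith
          positivity
        · rw [sub_neg]
          gcongr

theorem stmt_6_general (N : ℕ) (Ω : Set (EuclideanSpace ℝ (Fin N)))
    (q p lam : ℝ)
    (hq0 : 0 < q) (hq1 : q < 1) (hp : 1 < p) (hlam : 0 < lam)
    (k h : EuclideanSpace ℝ (Fin N) → ℝ)
    (u : EuclideanSpace ℝ (Fin N) → ℝ)
    (hEn : (∫ x in Ω, ‖fderiv ℝ u x‖ ^ 2) =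
        lam * (∫ x in Ω, k x * u x ^ (q + 1)) + ∫ x in Ω, h x * u x ^ (p + 1))
    (hStab : (∫ x in Ω, ‖fderiv ℝ u x‖ ^ 2) ≥
        lam * q * (∫ x in Ω, k x * u x ^ (q + 1)) + p * ∫ x in Ω, h x * u x ^ (p + 1))
    (hpos : (0 : ℝ) < ∫ x in Ω, k x * u x ^ (q + 1)) :
    (1 / 2) * (∫ x in Ω, ‖fderiv ℝ u x‖ ^ 2)
        - (lam / (q + 1)) * (∫ x in Ω, k x * u x ^ (q + 1))
        - (1 / (p + 1)) * (∫ x in Ω, h x * u x ^ (p + 1)) < 0 :=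
  energy_neg_of_energy_eq_of_stable (by linarith) hq1 (by linarith) (mul_pos hlam hpos) hEn hStab

/-- under the energy identity and semi-stability, and if
`∫ k·u^{q+1} > 0`, the energy
`E(u) = (1/2)∫|∇u|² − (λ/(q+1))∫ k·u^{q+1} − (1/(p+1))∫ h·u^{p+1}` is negative. -/
theorem stmt_6 (N : ℕ) (hN : 0 < N) (Ω : Set (EuclideanSpace ℝ (Fin N)))
    (hΩ : MeasurableSet Ω) (q p lam : ℝ)
    (hq0 : 0 < q) (hq1 : q < 1) (hp : 1 < p) (hlam : 0 < lam)
    (k h : EuclideanSpace ℝ (Fin N) → ℝ) (hk : Measurable k) (hh : Measurable h)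
    (hk0 : ∀ᵐ x ∂(volume.restrict Ω), 0 ≤ k x)
    (hh0 : ∀ᵐ x ∂(volume.restrict Ω), 0 ≤ h x)
    (u : EuclideanSpace ℝ (Fin N) → ℝ) (hu : Differentiable ℝ u)
    (hu0 : ∀ᵐ x ∂(volume.restrict Ω), 0 ≤ u x)
    (hI1 : IntegrableOn (fun x => ‖fderiv ℝ u x‖ ^ 2) Ω volume)
    (hI2 : IntegrableOn (fun x => k x * u x ^ (q + 1)) Ω volume)
    (hI3 : IntegrableOn (fun x => h x * u x ^ (p + 1)) Ω volume)
    (hEn : (∫ x in Ω, ‖fderiv ℝ u x‖ ^ 2) =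
        lam * (∫ x in Ω, k x * u x ^ (q + 1)) + ∫ x in Ω, h x * u x ^ (p + 1))
    (hStab : (∫ x in Ω, ‖fderiv ℝ u x‖ ^ 2) ≥
        lam * q * (∫ x in Ω, k x * u x ^ (q + 1)) + p * ∫ x in Ω, h x * u x ^ (p + 1))
    (hpos : (0 : ℝ) < ∫ x in Ω, k x * u x ^ (q + 1)) :
    (1 / 2) * (∫ x in Ω, ‖fderiv ℝ u x‖ ^ 2)
        - (lam / (q + 1)) * (∫ x in Ω, k x * u x ^ (q + 1))
        - (1 / (p + 1)) * (∫ x in Ω, h x * u x ^ (p + 1)) < 0 :=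
  stmt_6_general N Ω q p lam hq0 hq1 hp hlam k h u hEn hStab hpos
end

section
/- Let N be a positive natural number, let Ω ⊆ ℝ^N be a measurable set of finite positive Lebesgue measure, let q, p be real numbers with 0 < q < 1 < p, and let λ > 0. Let k, h : ℝ^N → ℝ be essentially bounded on Ω with k ≥ 0 a.e. on Ω and essinf_{x∈Ω} h(x) > 0. Then there exists a real number m < 0 such that for every measurable function u : ℝ^N → ℝ with ∫_Ω |u|^{p+1} dx < ∞ one has −(λ/(q+1))·∫_Ω k·|u|^{q+1} dx + (1/(p+1))·∫_Ω h·|u|^{p+1} dx ≥ m. -/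
/-!
Pointwise, `b t ^ s - a t ^ r` with `0 ≤ r < s` and `b > 0` is bounded below on `t ≥ 0`: it is
nonnegative once `t ^ (s - r) ≥ a / b`, and below that threshold `a t ^ r` is bounded.
Bounding `k` by its `L^∞` norm and `h` from below by its essential infimum, the integrand of the
potential energy is therefore bounded below by a constant, which integrates to a finite constant
because `Ω` has finite measure.
-/

open MeasureTheory

lemma exists_forall_neg_le_mul_rpow_sub_mul_rpow {r s : ℝ} (hr : 0 ≤ r) (hrs : r < s)
    {a b : ℝ} (ha : 0 ≤ a) (hb : 0 < b) :
    ∃ C, 0 ≤ C ∧ ∀ t, 0 ≤ t → -C ≤ b * t ^ s - a * t ^ r := by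
  set T := (a / b) ^ (s - r)⁻¹
  have hT : 0 ≤ T := by positivity
  refine ⟨a * T ^ r, by positivity, fun t ht => ?_⟩
  rcases le_or_gt t T with htT | hTt
  · have hle : t ^ r ≤ T ^ r := Real.rpow_le_rpow ht htT hr
    nlinarith [Real.rpow_nonneg ht s]
  · have ht0 : 0 < t := hT.trans_lt hTt
    have hthreshold : a ≤ b * t ^ (s - r) := by
      calc a = b * T ^ (s - r) := by
            rw [Real.rpow_inv_rpow (by positivity) (sub_pos.2 hrs).ne']; field_simp
        _ ≤ b * t ^ (s - r) := by gcongr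
    have hsplit : t ^ s = t ^ r * t ^ (s - r) := by
      rw [← Real.rpow_add ht0, add_sub_cancel]
    have hnonneg : 0 ≤ b * t ^ s - a * t ^ r := by
      rw [hsplit]; nlinarith [Real.rpow_nonneg ht r]
    linarith [mul_nonneg ha (Real.rpow_nonneg hT r)]

namespace MeasureTheory

variable {α E : Type*} [MeasurableSpace α] {μ : Measure α} [NormedAddCommGroup E]

lemma MemLp.ae_norm_le_toReal_eLpNorm_top {f : α → E} (hf : MemLp f ⊤ μ) :
    ∀ᵐ x ∂μ, ‖f x‖ ≤ (eLpNorm f ⊤ μ).toReal := by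
  filter_upwards [ae_le_eLpNormEssSup (f := f)] with x hx
  have hf_fin := hf.eLpNorm_lt_top
  rw [eLpNorm_exponent_top] at hf_fin ⊢
  simpa using ENNReal.toReal_mono hf_fin.ne hx

lemma MemLp.ae_essInf_le {g : α → ℝ} (hg : MemLp g ⊤ μ) : ∀ᵐ x ∂μ, essInf g μ ≤ g x := by
  refine _root_.ae_essInf_le ⟨-(eLpNorm g ⊤ μ).toReal, Filter.eventually_map.2 ?_⟩
  filter_upwards [hg.ae_norm_le_toReal_eLpNorm_top] with x hx
  exact neg_le_of_abs_le hx

end MeasureTheory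

theorem exists_forall_neg_le_mul_integral_add_mul_integral {α : Type*}
    [MeasurableSpace α] {μ : Measure α} [IsFiniteMeasure μ] {r s : ℝ} (hr : 0 < r) (hrs : r < s)
    (a : ℝ) {b : ℝ} (hb : 0 < b) {f g : α → ℝ} (hf : MemLp f ⊤ μ) (hg : MemLp g ⊤ μ)
    (hg_pos : 0 < essInf g μ) :
    ∃ C, 0 ≤ C ∧ ∀ u : α → ℝ, AEStronglyMeasurable u μ →
      Integrable (fun x => |u x| ^ s) μ →
      -C ≤ a * (∫ x, f x * |u x| ^ r ∂μ) + b * (∫ x, g x * |u x| ^ s ∂μ) := by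
  set K := (eLpNorm f ⊤ μ).toReal
  obtain ⟨C, hC0, hC⟩ := exists_forall_neg_le_mul_rpow_sub_mul_rpow hr.le hrs
    (a := |a| * K) (by positivity) (mul_pos hb hg_pos)
  refine ⟨C * μ.real Set.univ, by positivity, fun u hu hus => ?_⟩
  have hur : Integrable (fun x => |u x| ^ r) μ := by
    simpa only [Real.norm_eq_abs] using integrable_norm_rpow_of_le hu hr.le (hr.trans hrs).le
      hrs.le (by simpa only [Real.norm_eq_abs])
  have hfu : Integrable (fun x => f x * |u x| ^ r) μ := hur.mul_of_top_right hf
  have hgu : Integrable (fun x => g x * |u x| ^ s) μ := hus.mul_of_top_right hg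
  have hpointwise : ∀ᵐ x ∂μ, -C ≤ a * (f x * |u x| ^ r) + b * (g x * |u x| ^ s) := by
    filter_upwards [hf.ae_norm_le_toReal_eLpNorm_top, hg.ae_essInf_le] with x hfx hgx
    have hu0 := abs_nonneg (u x)
    have hcoef_f : -(|a| * K) ≤ a * f x := by
      calc -(|a| * K) ≤ -|a * f x| := by rw [abs_mul]; gcongr; exact hfx
        _ ≤ a * f x := neg_abs_le _
    have hcoef_g : b * essInf g μ ≤ b * g x := by gcongr
    calc -C ≤ b * essInf g μ * |u x| ^ s - |a| * K * |u x| ^ r := hC _ hu0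
      _ ≤ a * f x * |u x| ^ r + b * g x * |u x| ^ s := by
        nlinarith [Real.rpow_nonneg hu0 r, Real.rpow_nonneg hu0 s]
      _ = _ := by ring
  calc -(C * μ.real Set.univ) = ∫ _, -C ∂μ := by simp [integral_const, mul_comm]
    _ ≤ ∫ x, a * (f x * |u x| ^ r) + b * (g x * |u x| ^ s) ∂μ :=
        integral_mono_ae (integrable_const _) ((hfu.const_mul a).add (hgu.const_mul b)) hpointwise
    _ = _ := by rw [integral_add (hfu.const_mul a) (hgu.const_mul b), integral_const_mul,
        integral_const_mul]

theorem stmt_9_general (N : ℕ) (Ω : Set (EuclideanSpace ℝ (Fin N)))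
    (hΩfin : volume Ω < ⊤)
    (q p lam : ℝ) (hq0 : 0 < q) (hq1 : q < 1) (hp : 1 < p)
    (k h : EuclideanSpace ℝ (Fin N) → ℝ)
    (hkb : MemLp k ⊤ (volume.restrict Ω)) (hhb : MemLp h ⊤ (volume.restrict Ω))
    (hhinf : 0 < essInf h (volume.restrict Ω)) :
    ∃ m : ℝ, m < 0 ∧ ∀ u : EuclideanSpace ℝ (Fin N) → ℝ, Measurable u →
      IntegrableOn (fun x => |u x| ^ (p + 1)) Ω volume →
      -(lam / (q + 1)) * (∫ x in Ω, k x * |u x| ^ (q + 1))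
          + (1 / (p + 1)) * (∫ x in Ω, h x * |u x| ^ (p + 1)) ≥ m := by
  have : IsFiniteMeasure (volume.restrict Ω) := isFiniteMeasure_restrict.2 hΩfin.ne
  obtain ⟨C, hC0, hC⟩ := exists_forall_neg_le_mul_integral_add_mul_integral
    (by linarith : 0 < q + 1) (by linarith : q + 1 < p + 1) (-(lam / (q + 1)))
    (by positivity : 0 < 1 / (p + 1)) hkb hhb hhinf
  exact ⟨-C - 1, by linarith, fun u hu hup =>
    (hC u hu.aestronglyMeasurable hup).trans' (by linarith)⟩

/-- uniform lower bound for the potential part of the energy: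
there is `m < 0` with `−(λ/(q+1))∫ k|u|^{q+1} + (1/(p+1))∫ h|u|^{p+1} ≥ m`
for every measurable `u` with `∫ |u|^{p+1} < ∞`. -/
theorem stmt_9 (N : ℕ) (hN : 0 < N) (Ω : Set (EuclideanSpace ℝ (Fin N)))
    (hΩ : MeasurableSet Ω) (hΩfin : volume Ω < ⊤) (hΩpos : 0 < volume Ω)
    (q p lam : ℝ) (hq0 : 0 < q) (hq1 : q < 1) (hp : 1 < p) (hlam : 0 < lam)
    (k h : EuclideanSpace ℝ (Fin N) → ℝ)
    (hkb : MemLp k ⊤ (volume.restrict Ω)) (hhb : MemLp h ⊤ (volume.restrict Ω))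
    (hk0 : ∀ᵐ x ∂(volume.restrict Ω), 0 ≤ k x)
    (hhinf : 0 < essInf h (volume.restrict Ω)) :
    ∃ m : ℝ, m < 0 ∧ ∀ u : EuclideanSpace ℝ (Fin N) → ℝ, Measurable u →
      IntegrableOn (fun x => |u x| ^ (p + 1)) Ω volume →
      -(lam / (q + 1)) * (∫ x in Ω, k x * |u x| ^ (q + 1))
          + (1 / (p + 1)) * (∫ x in Ω, h x * |u x| ^ (p + 1)) ≥ m :=
  stmt_9_general N Ω hΩfin q p lam hq0 hq1 hp k h hkb hhb hhinf
end

section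
/- Let N ≥ 3 be a natural number, let Ω ⊆ ℝ^N be a bounded measurable set, let q, p be real numbers with 0 < q < 1 < p, let k : ℝ^N → ℝ be measurable, nonnegative a.e. on Ω and essentially bounded on Ω, and let λ̄ > 0. Then there exists a constant C > 0 such that the following holds: for every λ with 0 < λ ≤ λ̄ and every nonnegative continuously differentiable function u : ℝ^N → ℝ with compact support contained in Ω, if for some measurable h : ℝ^N → ℝ with h ≥ 0 a.e. on Ω the quantities ∫_Ω k·u^{q+1} dx and ∫_Ω h·u^{p+1} dx are finite and u satisfies both ∫_Ω |∇u|² dx = λ·∫_Ω k·u^{q+1} dx + ∫_Ω h·u^{p+1} dx and ∫_Ω |∇u|² dx ≥ λ·q·∫_Ω k·u^{q+1} dx + p·∫_Ω h·u^{p+1} dx, then ∫_Ω |∇u|² dx ≤ C. -/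
/-!
Subtracting the semi-stability inequality from `p` times the energy identity eliminates the
`h`-term: `(p - 1) E ≤ λ (p - q) ∫ k u^(q+1)`, where `E = ∫ |∇u|²`. Bounding `k` by its sup norm
and `∫ u^(q+1)` by the Sobolev inequality on the bounded set `Ω` (valid since `q + 1 < 2 ≤ 2*`)
gives `E ≤ B E^((q+1)/2)` with `B` independent of `u`, `λ` and `h`; as `(q + 1)/2 < 1`, this
bounds `E` by `B^(2/(1-q))`.
-/

open MeasureTheory Module
open scoped ENNReal NNReal

lemma le_rpow_inv_sub_of_le_mul_rpow {E B α : ℝ} (hE : 0 ≤ E) (hB : 0 ≤ B) (hα : α < 1)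
    (h : E ≤ B * E ^ α) : E ≤ B ^ (1 - α)⁻¹ := by
  rcases hE.eq_or_lt with rfl | hE
  · positivity
  have hEB : E ^ (1 - α) ≤ B := by
    rwa [Real.rpow_sub hE, Real.rpow_one, div_le_iff₀ (by positivity)]
  calc E = (E ^ (1 - α)) ^ (1 - α)⁻¹ := (Real.rpow_rpow_inv hE.le (by linarith)).symm
    _ ≤ B ^ (1 - α)⁻¹ := by gcongr

lemma sub_one_mul_le_of_semistable {E K H lam q p : ℝ} (henergy : E = lam * K + H)
    (hstab : E ≥ lam * q * K + p * H) : (p - 1) * E ≤ lam * (p - q) * K := by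
  linear_combination p * henergy + hstab

namespace MeasureTheory

section EssSup

variable {α : Type*} {m : MeasurableSpace α} {μ : Measure α}

lemma MemLp.norm_ae_le_toReal_eLpNorm_top {F : Type*} [NormedAddCommGroup F] {f : α → F}
    (hf : MemLp f ∞ μ) : ∀ᵐ x ∂μ, ‖f x‖ ≤ (eLpNorm f ∞ μ).toReal := by
  filter_upwards [enorm_ae_le_eLpNormEssSup f μ] with x hx
  have hfin : eLpNorm f ∞ μ ≠ ∞ := hf.eLpNorm_lt_top.ne
  rw [eLpNorm_exponent_top] at hfin ⊢
  simpa using ENNReal.toReal_mono hfin hx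

lemma integral_mul_le_toReal_eLpNorm_top_mul_integral {k f : α → ℝ} (hk : MemLp k ∞ μ)
    (hf : Integrable f μ) (hf0 : 0 ≤ᵐ[μ] f) :
    ∫ x, k x * f x ∂μ ≤ (eLpNorm k ∞ μ).toReal * ∫ x, f x ∂μ := by
  rw [← integral_const_mul]
  refine integral_mono_ae (hf.mul_of_top_right hk) (hf.const_mul _) ?_
  filter_upwards [hk.norm_ae_le_toReal_eLpNorm_top, hf0] with x hkx hfx
  exact mul_le_mul_of_nonneg_right ((le_abs_self _).trans hkx) hfx

end EssSup

section Sobolev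

variable {E F : Type*} [NormedAddCommGroup E] [NormedSpace ℝ E] [MeasurableSpace E]
  [BorelSpace E] [FiniteDimensional ℝ E] (μ : Measure E) [μ.IsAddHaarMeasure]
  [NormedAddCommGroup F] [NormedSpace ℝ F] [FiniteDimensional ℝ F]
  {s : Set E} {p q : ℝ}

lemma exists_integral_norm_rpow_le_mul_integral_norm_fderiv_rpow
    (hs : Bornology.IsBounded s) (hp : 1 ≤ p) (h2p : p < finrank ℝ E) (hq : 0 < q)
    (hpq : p⁻¹ - (finrank ℝ E : ℝ)⁻¹ ≤ q⁻¹) :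
    ∃ C ≥ 0, ∀ u : E → F, ContDiff ℝ 1 u → u.support ⊆ s →
      ∫ x, ‖u x‖ ^ q ∂μ ≤ C * (∫ x, ‖fderiv ℝ u x‖ ^ p ∂μ) ^ (q / p) := by
  lift p to ℝ≥0 using by linarith
  lift q to ℝ≥0 using hq.le
  set C := eLpNormLESNormFDerivOfLeConst F μ s p q
  refine ⟨(C : ℝ) ^ (q : ℝ), by positivity, fun u hu hus ↦ ?_⟩
  have hcpt : HasCompactSupport u :=
    .of_support_subset_isCompact hs.isCompact_closure (hus.trans subset_closure)
  have hsob := eLpNorm_le_eLpNorm_fderiv_of_le μ hu hus (by exact_mod_cast hp)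
    (by exact_mod_cast h2p) hpq hs
  rw [(hu.continuous.memLp_of_hasCompactSupport hcpt).eLpNorm_eq_integral_rpow_norm
      (by simpa using hq.ne') ENNReal.coe_ne_top,
    ((hu.continuous_fderiv one_ne_zero).memLp_of_hasCompactSupport
      (hcpt.fderiv ℝ)).eLpNorm_eq_integral_rpow_norm
      (by simpa using (show (0 : ℝ) < p by linarith).ne') ENNReal.coe_ne_top,
    ← ENNReal.ofReal_coe_nnreal (p := C), ← ENNReal.ofReal_mul C.coe_nonneg,
    ENNReal.ofReal_le_ofReal_iff (by positivity)] at hsob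
  simp only [ENNReal.coe_toReal] at hsob
  have hU : 0 ≤ ∫ x, ‖u x‖ ^ (q : ℝ) ∂μ := by positivity
  have hDU : 0 ≤ ∫ x, ‖fderiv ℝ u x‖ ^ (p : ℝ) ∂μ := by positivity
  calc ∫ x, ‖u x‖ ^ (q : ℝ) ∂μ = ((∫ x, ‖u x‖ ^ (q : ℝ) ∂μ) ^ (q : ℝ)⁻¹) ^ (q : ℝ) :=
        (Real.rpow_inv_rpow hU hq.ne').symm
    _ ≤ (C * (∫ x, ‖fderiv ℝ u x‖ ^ (p : ℝ) ∂μ) ^ (p : ℝ)⁻¹) ^ (q : ℝ) := by gcongr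
    _ = _ := by
      rw [Real.mul_rpow C.coe_nonneg (by positivity), ← Real.rpow_mul hDU, inv_mul_eq_div]

lemma exists_setIntegral_norm_rpow_le_mul_setIntegral_norm_fderiv_rpow
    (hs : Bornology.IsBounded s) (hp : 1 ≤ p) (h2p : p < finrank ℝ E) (hq : 0 < q)
    (hpq : p⁻¹ - (finrank ℝ E : ℝ)⁻¹ ≤ q⁻¹) :
    ∃ C ≥ 0, ∀ u : E → F, ContDiff ℝ 1 u → tsupport u ⊆ s →
      ∫ x in s, ‖u x‖ ^ q ∂μ ≤ C * (∫ x in s, ‖fderiv ℝ u x‖ ^ p ∂μ) ^ (q / p) := by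
  obtain ⟨C, hC, hsob⟩ :=
    exists_integral_norm_rpow_le_mul_integral_norm_fderiv_rpow (F := F) μ hs hp h2p hq hpq
  refine ⟨C, hC, fun u hu hus ↦ ?_⟩
  have hu_out {x} (hx : x ∉ s) : x ∉ tsupport u := fun h ↦ hx (hus h)
  rw [setIntegral_eq_integral_of_forall_compl_eq_zero fun x hx ↦ by
      simp [image_eq_zero_of_notMem_tsupport (hu_out hx), Real.zero_rpow hq.ne'],
    setIntegral_eq_integral_of_forall_compl_eq_zero fun x hx ↦ by
      simp [fderiv_of_notMem_tsupport ℝ (hu_out hx), Real.zero_rpow (by linarith : p ≠ 0)]]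
  exact hsob u hu ((subset_tsupport u).trans hus)

end Sobolev

end MeasureTheory

theorem stmt_12_general (N : ℕ) (hN : 3 ≤ N) (Ω : Set (EuclideanSpace ℝ (Fin N)))
    (hΩb : Bornology.IsBounded Ω)
    (q p : ℝ) (hq0 : 0 < q) (hq1 : q < 1) (hp : 1 < p)
    (k : EuclideanSpace ℝ (Fin N) → ℝ)
    (hk0 : ∀ᵐ x ∂(volume.restrict Ω), 0 ≤ k x)
    (hkb : MemLp k ⊤ (volume.restrict Ω))
    (lamBar : ℝ) (hlamBar : 0 < lamBar) :
    ∃ C : ℝ, 0 < C ∧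
      ∀ (lam : ℝ), 0 < lam → lam ≤ lamBar →
      ∀ u : EuclideanSpace ℝ (Fin N) → ℝ, ContDiff ℝ 1 u → (∀ x, 0 ≤ u x) →
        HasCompactSupport u → tsupport u ⊆ Ω →
      ∀ h : EuclideanSpace ℝ (Fin N) → ℝ, Measurable h →
        (∀ᵐ x ∂(volume.restrict Ω), 0 ≤ h x) →
        IntegrableOn (fun x => k x * u x ^ (q + 1)) Ω volume →
        IntegrableOn (fun x => h x * u x ^ (p + 1)) Ω volume →
        (∫ x in Ω, ‖fderiv ℝ u x‖ ^ 2) =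
            lam * (∫ x in Ω, k x * u x ^ (q + 1)) + ∫ x in Ω, h x * u x ^ (p + 1) →
        (∫ x in Ω, ‖fderiv ℝ u x‖ ^ 2) ≥
            lam * q * (∫ x in Ω, k x * u x ^ (q + 1))
              + p * ∫ x in Ω, h x * u x ^ (p + 1) →
        (∫ x in Ω, ‖fderiv ℝ u x‖ ^ 2) ≤ C := by
  have hdim : finrank ℝ (EuclideanSpace ℝ (Fin N)) = N := finrank_euclideanSpace_fin
  obtain ⟨CS, hCS, hsob⟩ := exists_setIntegral_norm_rpow_le_mul_setIntegral_norm_fderiv_rpow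
    (F := ℝ) volume hΩb (p := 2) (q := q + 1) one_le_two (by rw [hdim]; exact_mod_cast hN)
    (by linarith) (by
      have h2q : (2 : ℝ)⁻¹ ≤ (q + 1)⁻¹ := inv_anti₀ (by linarith) (by linarith)
      have hN0 : (0 : ℝ) ≤ (finrank ℝ (EuclideanSpace ℝ (Fin N)) : ℝ)⁻¹ := by positivity
      linarith)
  set M := (eLpNorm k ⊤ (volume.restrict Ω)).toReal
  set A := lamBar * (p - q) / (p - 1)
  have hA : 0 ≤ A := div_nonneg (mul_nonneg hlamBar.le (by linarith)) (by linarith)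
  refine ⟨(A * M * CS) ^ (1 - (q + 1) / 2)⁻¹ + 1, by positivity, ?_⟩
  intro lam _ hlamle u hu hu0 hu_cpt hsupp h _ _ _ _ henergy hstab
  set E := ∫ x in Ω, ‖fderiv ℝ u x‖ ^ 2
  set K := ∫ x in Ω, k x * u x ^ (q + 1)
  have hK0 : 0 ≤ K :=
    integral_nonneg_of_ae <| hk0.mono fun x hx ↦ mul_nonneg hx (Real.rpow_nonneg (hu0 x) _)
  have hJ : ∫ x in Ω, u x ^ (q + 1) ≤ CS * E ^ ((q + 1) / 2) := by
    simpa only [Real.norm_of_nonneg (hu0 _), Real.rpow_two] using hsob u hu hsupp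
  have hKM : K ≤ M * ∫ x in Ω, u x ^ (q + 1) :=
    integral_mul_le_toReal_eLpNorm_top_mul_integral hkb
      (((hu.continuous.rpow_const fun _ ↦ Or.inr (by linarith)).integrable_of_hasCompactSupport
        (hu_cpt.comp_left (g := (· ^ (q + 1))) (Real.zero_rpow (by linarith)))).integrableOn)
      (ae_of_all _ fun x ↦ Real.rpow_nonneg (hu0 x) _)
  have hEB : E ≤ A * M * CS * E ^ ((q + 1) / 2) := calc
    E ≤ lam * (p - q) / (p - 1) * K := by
      rw [div_mul_eq_mul_div, le_div_iff₀ (by linarith), mul_comm E]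
      exact sub_one_mul_le_of_semistable henergy hstab
    _ ≤ lamBar * (p - q) / (p - 1) * K := by gcongr; linarith
    _ ≤ A * (M * (CS * E ^ ((q + 1) / 2))) := by gcongr; exact hKM.trans (by gcongr)
    _ = A * M * CS * E ^ ((q + 1) / 2) := by ring
  linarith [le_rpow_inv_sub_of_le_mul_rpow (by positivity) (by positivity) (by linarith) hEB]

/-- uniform a priori `H¹`-bound for semi-stable solutions: for `N ≥ 3`,
`Ω` bounded, `k` bounded and nonnegative, and `λ̄ > 0`, there is `C > 0` such that
every nonnegative `C¹` function `u` with compact support in `Ω` satisfying the energy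
identity and the semi-stability inequality for some `0 < λ ≤ λ̄` and some nonnegative
measurable `h` has `∫ |∇u|² ≤ C`. -/
theorem stmt_12 (N : ℕ) (hN : 3 ≤ N) (Ω : Set (EuclideanSpace ℝ (Fin N)))
    (hΩ : MeasurableSet Ω) (hΩb : Bornology.IsBounded Ω)
    (q p : ℝ) (hq0 : 0 < q) (hq1 : q < 1) (hp : 1 < p)
    (k : EuclideanSpace ℝ (Fin N) → ℝ) (hk : Measurable k)
    (hk0 : ∀ᵐ x ∂(volume.restrict Ω), 0 ≤ k x)
    (hkb : MemLp k ⊤ (volume.restrict Ω))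
    (lamBar : ℝ) (hlamBar : 0 < lamBar) :
    ∃ C : ℝ, 0 < C ∧
      ∀ (lam : ℝ), 0 < lam → lam ≤ lamBar →
      ∀ u : EuclideanSpace ℝ (Fin N) → ℝ, ContDiff ℝ 1 u → (∀ x, 0 ≤ u x) →
        HasCompactSupport u → tsupport u ⊆ Ω →
      ∀ h : EuclideanSpace ℝ (Fin N) → ℝ, Measurable h →
        (∀ᵐ x ∂(volume.restrict Ω), 0 ≤ h x) →
        IntegrableOn (fun x => k x * u x ^ (q + 1)) Ω volume →
        IntegrableOn (fun x => h x * u x ^ (p + 1)) Ω volume →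
        (∫ x in Ω, ‖fderiv ℝ u x‖ ^ 2) =
            lam * (∫ x in Ω, k x * u x ^ (q + 1)) + ∫ x in Ω, h x * u x ^ (p + 1) →
        (∫ x in Ω, ‖fderiv ℝ u x‖ ^ 2) ≥
            lam * q * (∫ x in Ω, k x * u x ^ (q + 1))
              + p * ∫ x in Ω, h x * u x ^ (p + 1) →
        (∫ x in Ω, ‖fderiv ℝ u x‖ ^ 2) ≤ C :=
  stmt_12_general N hN Ω hΩb q p hq0 hq1 hp k hk0 hkb lamBar hlamBar
end
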